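/- Nonnegativity and identity of indiscernibles for the full-conditional divergence: for positive distributions p and q on X and weights c_i ≥ 0 with Σ_i c_i = 1, FC(p‖q) ≥ 0; moreover, if c_i > 0 for all i, then FC(p‖q) = 0 if and only if p(xᵢ|x₋ᵢ) = q(xᵢ|x₋ᵢ) for every i ∈ ι and every x ∈ X. -/

import Mathlib

open Finset

variable {ι : Type} [Fintype ι] [DecidableEq ι] [Nonempty ι]
  {α : ι → Type} [∀ i, Fintype (α i)] [∀ i, DecidableEq (α i)] [∀ i, Nonempty (α i)]

/-- `p` is a probability distribution on the joint space `X = Π j, α j`. -/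
def IsDist (p : (∀ j, α j) → ℝ) : Prop :=
  (∀ x, 0 ≤ p x) ∧ ∑ x, p x = 1

/-- The `i`-marginal `p₋ᵢ(x) = Σ_{a ∈ α i} p(x[i↦a])`. -/
noncomputable def marg (p : (∀ j, α j) → ℝ) (i : ι) (x : ∀ j, α j) : ℝ :=
  ∑ a, p (Function.update x i a)

/-- The full conditional `p(xᵢ|x₋ᵢ) = p(x)/p₋ᵢ(x)`. -/
noncomputable def fullCond (p : (∀ j, α j) → ℝ) (i : ι) (x : ∀ j, α j) : ℝ :=
  p x / marg p i x

/-- `θ` is a conditional probability table (CPT) at node `i`. -/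
def IsCPT (i : ι) (θ : α i → (∀ j, α j) → ℝ) : Prop :=
  (∀ a x, 0 < θ a x) ∧ (∀ x, ∑ a, θ a x = 1) ∧
  (∀ a x (b : α i), θ a (Function.update x i b) = θ a x)

/-- `q` belongs to the full-conditional manifold `E(θ)`. -/
def memE (i : ι) (θ : α i → (∀ j, α j) → ℝ) (q : (∀ j, α j) → ℝ) : Prop :=
  ∀ x, q x = marg q i x * θ (x i) x

/-- Kullback–Leibler divergence. -/
noncomputable def KL (p q : (∀ j, α j) → ℝ) : ℝ :=
  ∑ x, p x * Real.log (p x / q x)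

/-- The full-conditional divergence
`FC(p‖q) = Σ_i c_i·Σ_x p(x)·log( p(xᵢ|x₋ᵢ)/q(xᵢ|x₋ᵢ) )`. -/
noncomputable def FC (c : ι → ℝ) (p q : (∀ j, α j) → ℝ) : ℝ :=
  ∑ i, c i * ∑ x, p x * Real.log (fullCond p i x / fullCond q i x)

/-!
For each `i`, the inner sum of `FC` is the Kullback–Leibler divergence of `p` from
`x ↦ p₋ᵢ(x) · q(xᵢ|x₋ᵢ)`. This function has the same total mass as `p`, since summing against a
marginal is symmetric (substitute `(x, a) ↦ (x[i↦a], xᵢ)`) and `q(·|x₋ᵢ)` sums to one. Gibbs'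
inequality then gives nonnegativity, with equality exactly when `p(x) = p₋ᵢ(x) · q(xᵢ|x₋ᵢ)`,
i.e. when the `i`-th full conditionals of `p` and `q` agree.
-/

open InformationTheory Real

section Gibbs

variable {β : Type*} [Fintype β] {p q : β → ℝ}

lemma sum_mul_log_div_eq_sum_mul_klFun (hq : ∀ x, q x ≠ 0) (hpq : ∑ x, q x = ∑ x, p x) :
    ∑ x, p x * log (p x / q x) = ∑ x, q x * klFun (p x / q x) := by
  have hterm : ∀ x, q x * klFun (p x / q x) = p x * log (p x / q x) + (q x - p x) := by
    intro x
    rw [klFun_apply]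
    field_simp [hq x]
    ring
  simp_rw [hterm, sum_add_distrib, sum_sub_distrib, hpq, sub_self, add_zero]

lemma sum_mul_log_div_nonneg (hp : ∀ x, 0 ≤ p x) (hq : ∀ x, 0 < q x)
    (hpq : ∑ x, q x = ∑ x, p x) : 0 ≤ ∑ x, p x * log (p x / q x) := by
  rw [sum_mul_log_div_eq_sum_mul_klFun (fun x => (hq x).ne') hpq]
  exact sum_nonneg fun x _ => mul_nonneg (hq x).le (klFun_nonneg (div_nonneg (hp x) (hq x).le))

lemma sum_mul_log_div_eq_zero_iff (hp : ∀ x, 0 ≤ p x) (hq : ∀ x, 0 < q x)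
    (hpq : ∑ x, q x = ∑ x, p x) : ∑ x, p x * log (p x / q x) = 0 ↔ ∀ x, p x = q x := by
  rw [sum_mul_log_div_eq_sum_mul_klFun (fun x => (hq x).ne') hpq,
    sum_eq_zero_iff_of_nonneg fun x _ =>
      mul_nonneg (hq x).le (klFun_nonneg (div_nonneg (hp x) (hq x).le))]
  simp only [mem_univ, true_implies, mul_eq_zero, (hq _).ne', false_or,
    klFun_eq_zero_iff (div_nonneg (hp _) (hq _).le), div_eq_one_iff_eq (hq _).ne']

end Gibbs

section FullConditional

variable {ι : Type} [DecidableEq ι] {α : ι → Type} [∀ i, Fintype (α i)] {p q : (∀ j, α j) → ℝ}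

lemma marg_update (p : (∀ j, α j) → ℝ) (i : ι) (x : ∀ j, α j) (a : α i) :
    marg p i (Function.update x i a) = marg p i x := by
  simp only [marg, Function.update_idem]

lemma marg_fullCond {i : ι} {x : ∀ j, α j} (hq : marg q i x ≠ 0) :
    marg (fullCond q i) i x = 1 := by
  simp_rw [marg, fullCond, marg_update, ← sum_div]
  exact div_self hq

lemma marg_pos [∀ i, Nonempty (α i)] (hp : ∀ x, 0 < p x) (i : ι) (x : ∀ j, α j) :
    0 < marg p i x :=
  sum_pos (fun _ _ => hp _) univ_nonempty

lemma fullCond_pos [∀ i, Nonempty (α i)] (hp : ∀ x, 0 < p x) (i : ι) (x : ∀ j, α j) :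
    0 < fullCond p i x :=
  div_pos (hp x) (marg_pos hp i x)

variable [Fintype ι]

lemma sum_marg_mul_eq_sum_mul_marg (f g : (∀ j, α j) → ℝ) (i : ι) :
    ∑ x, marg f i x * g x = ∑ x, f x * marg g i x := by
  have hσ : Function.Involutive fun z : (∀ j, α j) × α i => (Function.update z.1 i z.2, z.1 i) :=
    fun z => by simp
  simp only [marg, sum_mul, mul_sum]
  rw [← Fintype.sum_prod_type', ← Fintype.sum_prod_type', ← Equiv.sum_comp (hσ.toPerm _)]
  simp

noncomputable def fullCondKL (p q : (∀ j, α j) → ℝ) (i : ι) : ℝ :=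
  ∑ x, p x * log (fullCond p i x / fullCond q i x)

lemma fullCondKL_eq_sum_mul_log_div (i : ι) :
    fullCondKL p q i = ∑ x, p x * log (p x / (marg p i x * fullCond q i x)) := by
  simp only [fullCondKL, fullCond, div_div]

variable [∀ i, Nonempty (α i)]

lemma sum_marg_mul_fullCond (hq : ∀ x, 0 < q x) (i : ι) :
    ∑ x, marg p i x * fullCond q i x = ∑ x, p x := by
  simp [sum_marg_mul_eq_sum_mul_marg, marg_fullCond (marg_pos hq i _).ne']

lemma fullCondKL_nonneg (hp : ∀ x, 0 < p x) (hq : ∀ x, 0 < q x) (i : ι) :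
    0 ≤ fullCondKL p q i := by
  rw [fullCondKL_eq_sum_mul_log_div]
  exact sum_mul_log_div_nonneg (fun x => (hp x).le)
    (fun x => mul_pos (marg_pos hp i x) (fullCond_pos hq i x)) (sum_marg_mul_fullCond hq i)

lemma fullCondKL_eq_zero_iff (hp : ∀ x, 0 < p x) (hq : ∀ x, 0 < q x) (i : ι) :
    fullCondKL p q i = 0 ↔ ∀ x, fullCond p i x = fullCond q i x := by
  rw [fullCondKL_eq_sum_mul_log_div, sum_mul_log_div_eq_zero_iff (fun x => (hp x).le)
    (fun x => mul_pos (marg_pos hp i x) (fullCond_pos hq i x)) (sum_marg_mul_fullCond hq i)]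
  refine forall_congr' fun x => ?_
  unfold fullCond
  rw [div_eq_iff (marg_pos hp i x).ne', mul_comm (marg p i x)]

end FullConditional

theorem FC_nonneg_and_eq_zero_iff_general
    (c : ι → ℝ) (hc0 : ∀ i, 0 ≤ c i)
    (p q : (∀ j, α j) → ℝ) (hppos : ∀ x, 0 < p x)
    (hqpos : ∀ x, 0 < q x) :
    0 ≤ FC c p q ∧
    ((∀ i, 0 < c i) →
      (FC c p q = 0 ↔ ∀ (i : ι) (x : ∀ j, α j), fullCond p i x = fullCond q i x)) := by
  have hFC : FC c p q = ∑ i, c i * fullCondKL p q i := rfl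
  have hterm_nonneg : ∀ i ∈ univ, 0 ≤ c i * fullCondKL p q i :=
    fun i _ => mul_nonneg (hc0 i) (fullCondKL_nonneg hppos hqpos i)
  refine ⟨hFC ▸ sum_nonneg hterm_nonneg, fun hc => ?_⟩
  rw [hFC, sum_eq_zero_iff_of_nonneg hterm_nonneg]
  simp only [mem_univ, true_implies, mul_eq_zero, (hc _).ne', false_or,
    fullCondKL_eq_zero_iff hppos hqpos]

/-- nonnegativity and identity of indiscernibles for the
full-conditional divergence. -/
theorem FC_nonneg_and_eq_zero_iff
    (c : ι → ℝ) (hc0 : ∀ i, 0 ≤ c i) (hc1 : ∑ i, c i = 1)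
    (p q : (∀ j, α j) → ℝ) (hp : IsDist p) (hppos : ∀ x, 0 < p x)
    (hq : IsDist q) (hqpos : ∀ x, 0 < q x) :
    0 ≤ FC c p q ∧
    ((∀ i, 0 < c i) →
      (FC c p q = 0 ↔ ∀ (i : ι) (x : ∀ j, α j), fullCond p i x = fullCond q i x)) :=
  FC_nonneg_and_eq_zero_iff_general c hc0 p q hppos hqpos
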